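/- arXiv:2006.05282 — 4 statements merged into one kernel-verified Lean document; each statement's English description precedes it below -/
import Mathlib

section
/- If two sequences a, b : ℤ^d → ℂ satisfy |a_k| ≤ C_a e^{-β|k|} and |b_k| ≤ C_b e^{-β|k|} for all k (where |k| = |k₁|+⋯+|k_d| is the 1-norm), then for every β' ∈ (0,β) the discrete convolution c_j = Σ_k a_{j-k} b_k satisfies |c_j| ≤ C_a C_b (coth((β-β')/2))^d e^{-β'|j|} for all j ∈ ℤ^d. -/
/-!
Coordinatewise `|j| ≤ |j - k| + |k|` and `|2k - j| ≤ |j - k| + |k|`, so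
`e^{-β|j-k|} e^{-β|k|} ≤ e^{-β'|j|} e^{-(β-β')|2k-j|}`. Since `k ↦ 2k - j` is injective, the sum of
the second factor over `k` is at most `∑_{m ∈ ℤ^d} e^{-(β-β')|m|}`, which factors over the
coordinates into `(∑_{n ∈ ℤ} e^{-(β-β')|n|})^d = coth((β-β')/2)^d`.
-/

open scoped BigOperators

/-- 1-norm of a multi-integer, as a real number. -/
noncomputable def oneNormZ {d : ℕ} (k : Fin d → ℤ) : ℝ :=
  ∑ i, |(k i : ℝ)|

open Real

theorem hasSum_exp_neg_mul_abs_int {s : ℝ} (hs : 0 < s) :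
    HasSum (fun n : ℤ => exp (-s * |(n : ℝ)|)) (cosh (s / 2) / sinh (s / 2)) := by
  have hr1 : exp (-s) < 1 := exp_lt_one_iff.mpr (by linarith)
  have hgeom := hasSum_geometric_of_lt_one (exp_pos (-s)).le hr1
  have hnonneg : HasSum (fun n : ℕ => exp (-s * |((n : ℤ) : ℝ)|)) (1 - exp (-s))⁻¹ := by
    refine hgeom.congr_fun fun n => ?_
    rw [Int.cast_natCast, abs_of_nonneg (Nat.cast_nonneg n), mul_comm, exp_nat_mul]
  have hneg : HasSum (fun n : ℕ => exp (-s * |((-(n + 1) : ℤ) : ℝ)|))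
      (exp (-s) * (1 - exp (-s))⁻¹) := by
    refine (hgeom.mul_left _).congr_fun fun n => ?_
    rw [← pow_succ', ← exp_nat_mul, Int.cast_neg, abs_neg, abs_of_nonneg (by positivity), mul_comm]
    push_cast
    rfl
  convert HasSum.of_nat_of_neg_add_one (f := fun n : ℤ => exp (-s * |(n : ℝ)|)) hnonneg hneg
    using 1
  have hu : 1 < exp (s / 2) := one_lt_exp_iff.mpr (by linarith)
  have hs2 : exp (-s) = (exp (s / 2) ^ 2)⁻¹ := by rw [← exp_nat_mul, ← exp_neg]; ring_nf
  rw [cosh_eq, sinh_eq, exp_neg (s / 2), hs2]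
  have hden : exp (s / 2) ^ 2 - 1 ≠ 0 := by nlinarith
  field_simp

theorem hasSum_prod_pi_of_nonneg {α : Type*} {d : ℕ} {f : Fin d → α → ℝ} {s : Fin d → ℝ}
    (hf0 : ∀ i x, 0 ≤ f i x) (hf : ∀ i, HasSum (f i) (s i)) :
    HasSum (fun m : Fin d → α => ∏ i, f i (m i)) (∏ i, s i) := by
  induction d with
  | zero => simp
  | succ d ih =>
    have htail := ih (fun i => hf0 i.succ) (fun i => hf i.succ)
    have hsummable := (hf 0).summable.mul_of_nonneg htail.summable (hf0 0)
      fun m => Finset.prod_nonneg fun (i : Fin d) _ => hf0 i.succ (m i)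
    rw [Fin.prod_univ_succ, ← (Fin.consEquiv fun _ => α).hasSum_iff]
    refine ((hf 0).mul htail hsummable).congr_fun fun x => ?_
    simp [Fin.prod_univ_succ, Fin.consEquiv]

theorem hasSum_exp_neg_mul_oneNormZ {d : ℕ} {s : ℝ} (hs : 0 < s) :
    HasSum (fun m : Fin d → ℤ => exp (-s * oneNormZ m)) ((cosh (s / 2) / sinh (s / 2)) ^ d) := by
  have h := hasSum_prod_pi_of_nonneg (d := d) (fun _ (n : ℤ) => (exp_pos (-s * |(n : ℝ)|)).le)
    fun _ => hasSum_exp_neg_mul_abs_int hs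
  simp only [Finset.prod_const, Finset.card_univ, Fintype.card_fin, ← exp_sum,
    ← Finset.mul_sum] at h
  exact h

theorem oneNormZ_add_le {d : ℕ} (x y : Fin d → ℤ) :
    oneNormZ (x + y) ≤ oneNormZ x + oneNormZ y := by
  simp only [oneNormZ, ← Finset.sum_add_distrib, Pi.add_apply, Int.cast_add]
  exact Finset.sum_le_sum fun i _ => abs_add_le _ _

theorem oneNormZ_sub_le {d : ℕ} (x y : Fin d → ℤ) :
    oneNormZ (x - y) ≤ oneNormZ x + oneNormZ y := by
  simp only [oneNormZ, ← Finset.sum_add_distrib, Pi.sub_apply, Int.cast_sub]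
  exact Finset.sum_le_sum fun i _ => abs_sub _ _

theorem exp_decay_mul_le {d : ℕ} {β β' : ℝ} (hβ' : 0 ≤ β') (hβ : β' ≤ β) (j k : Fin d → ℤ) :
    exp (-β * oneNormZ (j - k)) * exp (-β * oneNormZ k) ≤
      exp (-β' * oneNormZ j) * exp (-(β - β') * oneNormZ (k - (j - k))) := by
  have hj : oneNormZ j ≤ oneNormZ (j - k) + oneNormZ k := by
    simpa using oneNormZ_add_le (j - k) k
  have hk : oneNormZ (k - (j - k)) ≤ oneNormZ (j - k) + oneNormZ k :=
    (oneNormZ_sub_le k (j - k)).trans_eq (add_comm _ _)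
  rw [← exp_add, ← exp_add, exp_le_exp]
  nlinarith [mul_le_mul_of_nonneg_left hj hβ', mul_le_mul_of_nonneg_left hk (sub_nonneg.mpr hβ)]

theorem norm_mul_le_of_exp_decay {R : Type*} [SeminormedRing R] {d : ℕ} {β β' Ca Cb : ℝ}
    (hβ' : 0 ≤ β') (hβ : β' ≤ β) {a b : (Fin d → ℤ) → R}
    (ha : ∀ k, ‖a k‖ ≤ Ca * exp (-β * oneNormZ k))
    (hb : ∀ k, ‖b k‖ ≤ Cb * exp (-β * oneNormZ k)) (j k : Fin d → ℤ) :
    ‖a (j - k) * b k‖ ≤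
      Ca * Cb * exp (-β' * oneNormZ j) * exp (-(β - β') * oneNormZ (k - (j - k))) := by
  have hCa : 0 ≤ Ca := nonneg_of_mul_nonneg_left ((norm_nonneg _).trans (ha 0)) (exp_pos _)
  have hCb : 0 ≤ Cb := nonneg_of_mul_nonneg_left ((norm_nonneg _).trans (hb 0)) (exp_pos _)
  calc ‖a (j - k) * b k‖
      ≤ (Ca * exp (-β * oneNormZ (j - k))) * (Cb * exp (-β * oneNormZ k)) :=
        (norm_mul_le _ _).trans <|
          mul_le_mul (ha _) (hb _) (norm_nonneg _) ((norm_nonneg _).trans (ha _))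
    _ = Ca * Cb * (exp (-β * oneNormZ (j - k)) * exp (-β * oneNormZ k)) := by ring
    _ ≤ Ca * Cb * (exp (-β' * oneNormZ j) * exp (-(β - β') * oneNormZ (k - (j - k)))) :=
        mul_le_mul_of_nonneg_left (exp_decay_mul_le hβ' hβ j k) (mul_nonneg hCa hCb)
    _ = _ := by ring

theorem stmt_1 {d : ℕ} (β β' Ca Cb : ℝ) (hβ' : 0 < β') (hβ : β' < β)
    (a b : (Fin d → ℤ) → ℂ)
    (ha : ∀ k, ‖a k‖ ≤ Ca * Real.exp (-β * oneNormZ k))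
    (hb : ∀ k, ‖b k‖ ≤ Cb * Real.exp (-β * oneNormZ k)) :
    ∀ j : Fin d → ℤ,
      ‖∑' k : Fin d → ℤ, a (j - k) * b k‖ ≤
        Ca * Cb * (Real.cosh ((β - β') / 2) / Real.sinh ((β - β') / 2)) ^ d
          * Real.exp (-β' * oneNormZ j) := by
  intro j
  have hW := hasSum_exp_neg_mul_oneNormZ (d := d) (sub_pos.mpr hβ)
  have hinj : Function.Injective fun k : Fin d → ℤ => k - (j - k) := fun k k' h => by
    funext i
    have := congr_fun h i
    simp only [Pi.sub_apply] at this
    omega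
  have hw := hW.summable.comp_injective hinj
  have hw_le := (tsum_comp_le_tsum_of_inj hW.summable (fun _ => (exp_pos _).le) hinj).trans_eq
    hW.tsum_eq
  have hbound := norm_mul_le_of_exp_decay hβ'.le hβ.le ha hb j
  have hA : 0 ≤ Ca * Cb * exp (-β' * oneNormZ j) :=
    nonneg_of_mul_nonneg_left ((norm_nonneg _).trans (hbound 0)) (exp_pos _)
  have hterms := hw.mul_left (Ca * Cb * exp (-β' * oneNormZ j))
  have hnorms := hterms.of_nonneg_of_le (fun _ => norm_nonneg _) hbound
  calc ‖∑' k, a (j - k) * b k‖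
      ≤ ∑' k, ‖a (j - k) * b k‖ := norm_tsum_le_tsum_norm hnorms
    _ ≤ ∑' k, Ca * Cb * exp (-β' * oneNormZ j) * exp (-(β - β') * oneNormZ (k - (j - k))) :=
        hnorms.tsum_le_tsum hbound hterms
    _ = Ca * Cb * exp (-β' * oneNormZ j) *
          ∑' k, exp (-(β - β') * oneNormZ (k - (j - k))) := tsum_mul_left
    _ ≤ Ca * Cb * exp (-β' * oneNormZ j) * (cosh ((β - β') / 2) / sinh ((β - β') / 2)) ^ d :=
        mul_le_mul_of_nonneg_left hw_le hA
    _ = _ := by ring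
end

section
/- Let a : ℤ^d → ℝ satisfy |a_k| ≤ C₁(1+‖k‖)^{-α} and let f : ℝ^d → ℝ satisfy |f(x)| ≤ C₀(1+‖x‖)^{-α}, with α > d. Then the semi-discrete convolution χ(x) = Σ_{k∈ℤ^d} a_k f(x-k) converges absolutely and satisfies |χ(x)| ≤ C₂(1+‖x‖)^{-α} for all x ∈ ℝ^d, for some constant C₂ depending only on C₀, C₁, α, d. -/
open scoped BigOperators

/-- Euclidean norm of a multi-integer. -/
noncomputable def eNormZ {d : ℕ} (k : Fin d → ℤ) : ℝ :=
  Real.sqrt (∑ i, ((k i : ℝ)) ^ 2)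

/-- Euclidean norm of a real vector given coordinatewise. -/
noncomputable def eNormR {d : ℕ} (x : Fin d → ℝ) : ℝ :=
  Real.sqrt (∑ i, (x i) ^ 2)

/-!
Write `⟨y⟩ = 1 + ‖y‖`. Since `⟨x⟩ ≤ ⟨k⟩ + ⟨x - k⟩`, one of the two factors of
`⟨k⟩^(-α) ⟨x - k⟩^(-α)` is at most `(⟨x⟩ / 2)^(-α)`, so the summand is bounded by
`2^α ⟨x⟩^(-α) (⟨k⟩^(-α) + ⟨x - k⟩^(-α))`. Both sums over `k ∈ ℤ^d` are bounded independently of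
`x`: the first converges because `⟨k⟩^d` dominates `∏ i, (1 + |kᵢ|)` and `α / d > 1`, and the
second is compared with the first by Peetre's inequality after moving `x` to the nearest
lattice point.
-/

open Real Finset Filter

-- The larger of `A` and `B` is at least `X / 2`.
lemma rpow_neg_mul_rpow_neg_le {α A B X : ℝ} (hα : 0 ≤ α) (hA : 0 < A) (hB : 0 < B)
    (hX : 0 < X) (h : X ≤ A + B) :
    A ^ (-α) * B ^ (-α) ≤ 2 ^ α * X ^ (-α) * (A ^ (-α) + B ^ (-α)) := by
  wlog hAB : A ≤ B generalizing A B
  · rw [mul_comm, add_comm]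
    exact this hB hA (by linarith) (le_of_not_ge hAB)
  have hB_large : B ^ (-α) ≤ 2 ^ α * X ^ (-α) :=
    calc B ^ (-α) ≤ (X / 2) ^ (-α) :=
          rpow_le_rpow_of_nonpos (by positivity) (by linarith) (by linarith)
      _ = 2 ^ α * X ^ (-α) := by
          rw [div_rpow hX.le zero_le_two, rpow_neg zero_le_two, div_inv_eq_mul, mul_comm]
  calc A ^ (-α) * B ^ (-α) ≤ A ^ (-α) * (2 ^ α * X ^ (-α)) := by gcongr
    _ ≤ (A ^ (-α) + B ^ (-α)) * (2 ^ α * X ^ (-α)) := by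
        gcongr
        exact le_add_of_nonneg_right (by positivity)
    _ = 2 ^ α * X ^ (-α) * (A ^ (-α) + B ^ (-α)) := by ring

lemma one_add_rpow_neg_le_of_le_add {α r s t : ℝ} (hα : 0 ≤ α) (hr : 0 ≤ r) (hs : 0 ≤ s)
    (ht : 0 ≤ t) (h : r ≤ s + t) :
    (1 + s) ^ (-α) ≤ (1 + t) ^ α * (1 + r) ^ (-α) := by
  have hprod : 1 + r ≤ (1 + s) * (1 + t) := by nlinarith
  calc (1 + s) ^ (-α) = (1 + t) ^ α * ((1 + s) * (1 + t)) ^ (-α) := by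
        rw [mul_rpow (by linarith) (by linarith), rpow_neg (by linarith : (0:ℝ) ≤ 1 + t)]
        have : 0 < (1 + t) ^ α := by positivity
        field_simp
    _ ≤ (1 + t) ^ α * (1 + r) ^ (-α) :=
        mul_le_mul_of_nonneg_left (rpow_le_rpow_of_nonpos (by positivity) hprod (by linarith))
          (by positivity)

section Norms

variable {d : ℕ}

lemma eNormR_eq_norm (x : Fin d → ℝ) :
    eNormR x = ‖(WithLp.toLp 2 x : EuclideanSpace ℝ (Fin d))‖ := by
  simp [eNormR, EuclideanSpace.norm_eq]

lemma eNormR_nonneg (x : Fin d → ℝ) : 0 ≤ eNormR x := sqrt_nonneg _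

lemma eNormR_add_le (x y : Fin d → ℝ) : eNormR (x + y) ≤ eNormR x + eNormR y := by
  simpa only [eNormR_eq_norm, WithLp.toLp_add] using norm_add_le _ _

lemma eNormR_sub_comm (x y : Fin d → ℝ) : eNormR (x - y) = eNormR (y - x) := by
  simpa only [eNormR_eq_norm, WithLp.toLp_sub] using norm_sub_rev _ _

lemma abs_le_eNormR (x : Fin d → ℝ) (i : Fin d) : |x i| ≤ eNormR x := by
  rw [← sqrt_sq_eq_abs]
  exact sqrt_le_sqrt (single_le_sum (fun j _ => sq_nonneg (x j)) (mem_univ i))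

lemma eNormZ_eq_eNormR (k : Fin d → ℤ) : eNormZ k = eNormR fun i => (k i : ℝ) := rfl

lemma eNormR_sub_round_le (x : Fin d → ℝ) :
    eNormR (x - fun i => (round (x i) : ℝ)) ≤ √d := by
  unfold eNormR
  refine sqrt_le_sqrt ((sum_le_sum fun i _ => ?_).trans_eq (by simp : ∑ _i : Fin d, (1 : ℝ) = d))
  rw [sq_le_one_iff_abs_le_one]
  exact (abs_sub_round (x i)).trans (by norm_num)

lemma prod_one_add_abs_le_pow (x : Fin d → ℝ) : ∏ i, (1 + |x i|) ≤ (1 + eNormR x) ^ d := by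
  calc ∏ i, (1 + |x i|) ≤ ∏ _i : Fin d, (1 + eNormR x) :=
        prod_le_prod (fun i _ => by positivity) fun i _ => add_le_add le_rfl (abs_le_eNormR x i)
    _ = (1 + eNormR x) ^ d := by simp

end Norms

lemma summable_one_add_abs_int_rpow_neg {p : ℝ} (hp : 1 < p) :
    Summable fun n : ℤ => (1 + |(n : ℝ)|) ^ (-p) := by
  refine (summable_abs_int_rpow hp).of_norm_bounded_eventually ?_
  filter_upwards [eventually_cofinite_ne 0] with n hn
  have : 0 < |(n : ℝ)| := by positivity
  rw [norm_of_nonneg (by positivity)]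
  exact rpow_le_rpow_of_nonpos this (by linarith) (by linarith)

lemma summable_pi_prod_of_nonneg {β : Type*} {h : β → ℝ} (h0 : 0 ≤ h) (hs : Summable h)
    (d : ℕ) : Summable fun k : Fin d → β => ∏ i, h (k i) := by
  induction d with
  | zero => exact .of_finite
  | succ d ih =>
    rw [← (Fin.consEquiv fun _ => β).summable_iff]
    simpa [Function.comp_def, Fin.prod_univ_succ] using
      hs.mul_of_nonneg ih h0 fun k => prod_nonneg fun i _ => h0 (k i)

lemma summable_one_add_eNormZ_rpow_neg {d : ℕ} {α : ℝ} (hα : (d : ℝ) < α) :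
    Summable fun k : Fin d → ℤ => (1 + eNormZ k) ^ (-α) := by
  rcases Nat.eq_zero_or_pos d with rfl | hd
  · exact .of_finite
  have hd' : (0 : ℝ) < d := by exact_mod_cast hd
  have hp : 1 < α / d := (one_lt_div hd').2 hα
  refine (summable_pi_prod_of_nonneg (fun n => by positivity)
    (summable_one_add_abs_int_rpow_neg hp) d).of_nonneg_of_le
    (fun k => rpow_nonneg (add_nonneg zero_le_one (eNormR_nonneg _)) _) fun k => ?_
  have hk := prod_one_add_abs_le_pow fun i => (k i : ℝ)
  rw [finsetProd_rpow _ _ (fun i _ => by positivity), eNormZ_eq_eNormR]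
  calc (1 + eNormR fun i => (k i : ℝ)) ^ (-α)
      = ((1 + eNormR fun i => (k i : ℝ)) ^ d) ^ (-(α / d)) := by
        rw [← rpow_natCast, ← rpow_mul (add_nonneg zero_le_one (eNormR_nonneg _))]
        field_simp
    _ ≤ (∏ i, (1 + |(k i : ℝ)|)) ^ (-(α / d)) :=
        rpow_le_rpow_of_nonpos (by positivity) hk (by linarith)

lemma one_add_eNormZ_rpow_neg_mul_le {d : ℕ} {α : ℝ} (hα : 0 ≤ α) (x : Fin d → ℝ)
    (k : Fin d → ℤ) :
    (1 + eNormZ k) ^ (-α) * (1 + eNormR (x - fun i => (k i : ℝ))) ^ (-α) ≤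
      2 ^ α * (1 + eNormR x) ^ (-α) * ((1 + eNormZ k) ^ (-α) +
        (1 + √d) ^ α * (1 + eNormZ ((fun i => round (x i)) - k)) ^ (-α)) := by
  set y : Fin d → ℝ := fun i => (k i : ℝ)
  set m : Fin d → ℝ := fun i => (round (x i) : ℝ)
  have hsplit : eNormR x ≤ eNormR y + eNormR (x - y) := by
    simpa using eNormR_add_le y (x - y)
  have hshift : eNormR (m - y) ≤ eNormR (x - y) + √d := by
    have := eNormR_add_le (x - y) (m - x)
    rw [eNormR_sub_comm m x] at this
    simpa using this.trans (add_le_add le_rfl (eNormR_sub_round_le x))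
  have hmk : eNormZ ((fun i => round (x i)) - k) = eNormR (m - y) := by
    simp only [eNormZ_eq_eNormR, Pi.sub_apply, Int.cast_sub]
    rfl
  have hA : 0 ≤ eNormZ k := eNormR_nonneg _
  have hB : 0 ≤ eNormR (x - y) := eNormR_nonneg _
  rw [hmk]
  calc (1 + eNormZ k) ^ (-α) * (1 + eNormR (x - y)) ^ (-α)
      ≤ 2 ^ α * (1 + eNormR x) ^ (-α) * ((1 + eNormZ k) ^ (-α) + (1 + eNormR (x - y)) ^ (-α)) :=
        rpow_neg_mul_rpow_neg_le hα (by positivity) (by positivity)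
          (by linarith [eNormR_nonneg x]) (by rw [eNormZ_eq_eNormR]; linarith)
    _ ≤ _ := by
        gcongr ?_ * (_ + ?_)
        · exact mul_nonneg (by positivity) (rpow_nonneg (by linarith [eNormR_nonneg x]) _)
        exact one_add_rpow_neg_le_of_le_add hα (eNormR_nonneg _) hB (sqrt_nonneg _) hshift

lemma abs_mul_apply_sub_le {d : ℕ} {α C₀ C₁ : ℝ} (hα : 0 ≤ α) (hC₀ : 0 ≤ C₀) (hC₁ : 0 ≤ C₁)
    {a : (Fin d → ℤ) → ℝ} {f : (Fin d → ℝ) → ℝ}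
    (ha : ∀ k, |a k| ≤ C₁ * (1 + eNormZ k) ^ (-α))
    (hf : ∀ x, |f x| ≤ C₀ * (1 + eNormR x) ^ (-α)) (x : Fin d → ℝ) (k : Fin d → ℤ) :
    |a k * f (x - fun i => (k i : ℝ))| ≤
      C₀ * C₁ * (2 ^ α * (1 + eNormR x) ^ (-α) * ((1 + eNormZ k) ^ (-α) +
        (1 + √d) ^ α * (1 + eNormZ ((fun i => round (x i)) - k)) ^ (-α))) := by
  rw [abs_mul]
  refine (mul_le_mul (ha k) (hf _) (abs_nonneg _) ((abs_nonneg _).trans (ha k))).trans ?_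
  rw [mul_mul_mul_comm, mul_comm C₁]
  exact mul_le_mul_of_nonneg_left (one_add_eNormZ_rpow_neg_mul_le hα x k) (mul_nonneg hC₀ hC₁)

theorem stmt_4 {d : ℕ} (α C₀ C₁ : ℝ) (hα : (d : ℝ) < α) (hC₀ : 0 < C₀) (hC₁ : 0 < C₁)
    (a : (Fin d → ℤ) → ℝ) (f : (Fin d → ℝ) → ℝ)
    (ha : ∀ k, |a k| ≤ C₁ * (1 + eNormZ k) ^ (-α))
    (hf : ∀ x, |f x| ≤ C₀ * (1 + eNormR x) ^ (-α)) :
    (∀ x : Fin d → ℝ,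
        Summable fun k : Fin d → ℤ => |a k * f (x - fun i => (k i : ℝ))|) ∧
    ∃ C₂ : ℝ, ∀ x : Fin d → ℝ,
        |∑' k : Fin d → ℤ, a k * f (x - fun i => (k i : ℝ))|
          ≤ C₂ * (1 + eNormR x) ^ (-α) := by
  set g : (Fin d → ℤ) → ℝ := fun k => (1 + eNormZ k) ^ (-α)
  set S := ∑' k, g k
  set t := (1 + √d) ^ α
  have hg : HasSum g S := (summable_one_add_eNormZ_rpow_neg hα).hasSum
  have hle := abs_mul_apply_sub_le ((Nat.cast_nonneg d).trans hα.le) hC₀.le hC₁.le ha hf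
  have hmajorant (x : Fin d → ℝ) :
      HasSum (fun k => C₀ * C₁ * (2 ^ α * (1 + eNormR x) ^ (-α) *
          (g k + t * g ((fun i => round (x i)) - k))))
        (C₀ * C₁ * 2 ^ α * (S + t * S) * (1 + eNormR x) ^ (-α)) := by
    have hshift := (Equiv.subLeft fun i => round (x i)).hasSum_iff.2 hg
    rw [show C₀ * C₁ * 2 ^ α * (S + t * S) * (1 + eNormR x) ^ (-α) =
      C₀ * C₁ * (2 ^ α * (1 + eNormR x) ^ (-α) * (S + t * S)) by ring]
    exact ((hg.add (hshift.mul_left t)).mul_left _).mul_left _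
  exact ⟨fun x => ((hmajorant x).summable.of_norm_bounded (hle x)).abs,
    C₀ * C₁ * 2 ^ α * (S + t * S),
    fun x => norm_eq_abs _ ▸ tsum_of_norm_bounded (hmajorant x) (hle x)⟩
end

section
/- For 0 < β < α, the one-dimensional sum Σ_{k∈ℤ} e^{-β|k|} e^{-α|x-k|} is bounded above by e^{-β|x|} · (1+e^{β-α})/(1-e^{β-α}) for all x ∈ ℝ. -/
open Real
lemma lattice_hasSum (γ : ℝ) (hγ : 0 < γ) (t : ℝ) (ht0 : 0 ≤ t) (ht1 : t < 1) :
    HasSum (fun k : ℤ => Real.exp (-γ * |t - (k : ℝ)|))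
      (Real.exp (-γ * (1 - t)) * (1 - Real.exp (-γ))⁻¹ + Real.exp (-γ * t)
        + Real.exp (-γ * (t + 1)) * (1 - Real.exp (-γ))⁻¹) := by
  have hr0 : (0:ℝ) ≤ Real.exp (-γ) := (Real.exp_pos _).le
  have hr1 : Real.exp (-γ) < 1 := by
    rw [Real.exp_lt_one_iff]; linarith
  have hgeo := hasSum_geometric_of_lt_one hr0 hr1
  set f : ℤ → ℝ := fun k => Real.exp (-γ * |t - (k : ℝ)|) with hf
  have h1 : HasSum (fun n : ℕ => f ((n : ℤ) + 1))
      (Real.exp (-γ * (1 - t)) * (1 - Real.exp (-γ))⁻¹) := by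
    have h := hgeo.mul_left (Real.exp (-γ * (1 - t)))
    have heq : ∀ n : ℕ, f ((n : ℤ) + 1)
        = Real.exp (-γ * (1 - t)) * Real.exp (-γ) ^ n := fun n => by
      simp only [hf]
      rw [← Real.exp_nat_mul, ← Real.exp_add]
      congr 1
      have habs : |t - (((n : ℤ) + 1 : ℤ) : ℝ)| = (n : ℝ) + 1 - t := by
        rw [abs_of_nonpos] <;> push_cast <;> nlinarith [Nat.cast_nonneg (α := ℝ) n]
      rw [habs]; push_cast; ring
    simpa only [heq] using h
  have h2 : HasSum (fun n : ℕ => f (-((n : ℤ) + 1)))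
      (Real.exp (-γ * (t + 1)) * (1 - Real.exp (-γ))⁻¹) := by
    have h := hgeo.mul_left (Real.exp (-γ * (t + 1)))
    have heq : ∀ n : ℕ, f (-((n : ℤ) + 1))
        = Real.exp (-γ * (t + 1)) * Real.exp (-γ) ^ n := fun n => by
      simp only [hf]
      rw [← Real.exp_nat_mul, ← Real.exp_add]
      congr 1
      have habs : |t - ((-((n : ℤ) + 1) : ℤ) : ℝ)| = t + (n : ℝ) + 1 := by
        rw [abs_of_nonneg] <;> push_cast <;> nlinarith [Nat.cast_nonneg (α := ℝ) n]
      rw [habs]; push_cast; ring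
    simpa only [heq] using h
  have h := h1.of_add_one_of_neg_add_one h2
  have h0 : f 0 = Real.exp (-γ * t) := by
    simp [hf, abs_of_nonneg ht0]
  rw [h0] at h
  exact h

theorem stmt_6 (α β : ℝ) (hβ : 0 < β) (hβα : β < α) (x : ℝ) :
    ∑' k : ℤ, Real.exp (-β * |(k : ℝ)|) * Real.exp (-α * |x - (k : ℝ)|)
      ≤ Real.exp (-β * |x|) * ((1 + Real.exp (β - α)) / (1 - Real.exp (β - α))) := by
  set γ := α - β with hγdef
  have hγ : 0 < γ := by rw [hγdef]; linarith
  set n : ℤ := ⌊x⌋ with hn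
  set t : ℝ := x - n with htdef
  have ht0 : 0 ≤ t := by rw [htdef, hn]; linarith [Int.floor_le x]
  have ht1 : t < 1 := by rw [htdef, hn]; linarith [Int.lt_floor_add_one x]
  have hbase := lattice_hasSum γ hγ t ht0 ht1
  set S : ℝ := Real.exp (-γ * (1 - t)) * (1 - Real.exp (-γ))⁻¹ + Real.exp (-γ * t)
        + Real.exp (-γ * (t + 1)) * (1 - Real.exp (-γ))⁻¹ with hS
  have htrans : HasSum (fun k : ℤ => Real.exp (-γ * |x - (k : ℝ)|)) S := by
    apply (Equiv.addRight n).hasSum_iff.mp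
    have heq : ((fun k : ℤ => Real.exp (-γ * |x - (k : ℝ)|)) ∘ (Equiv.addRight n))
        = fun k : ℤ => Real.exp (-γ * |t - (k : ℝ)|) := by
      funext k
      simp only [Function.comp_apply, Equiv.coe_addRight]
      have hx : x - ((k + n : ℤ) : ℝ) = t - (k : ℝ) := by push_cast [htdef]; ring
      rw [hx]
    rw [heq]
    exact hbase
  have hr0 : (0:ℝ) < Real.exp (-γ) := Real.exp_pos _
  have hr1 : Real.exp (-γ) < 1 := by rw [Real.exp_lt_one_iff]; linarith
  have h1r : 0 < 1 - Real.exp (-γ) := by linarith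
  have hSbound : S ≤ (1 + Real.exp (-γ)) / (1 - Real.exp (-γ)) := by
    rw [hS, div_eq_mul_inv]
    have ha1 : Real.exp (-γ * t) ≤ 1 := by
      rw [Real.exp_le_one_iff]; nlinarith
    have hb1 : Real.exp (-γ * (1 - t)) ≤ 1 := by
      rw [Real.exp_le_one_iff]; nlinarith
    have hab : Real.exp (-γ * t) * Real.exp (-γ * (1 - t)) = Real.exp (-γ) := by
      rw [← Real.exp_add]; ring_nf
    have hc : Real.exp (-γ * (t + 1)) = Real.exp (-γ * t) * Real.exp (-γ) := by
      rw [← Real.exp_add]; ring_nf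
    rw [hc, ← sub_nonneg]
    have key : (1 + Real.exp (-γ)
        - (Real.exp (-γ * (1 - t)) + Real.exp (-γ * t) * (1 - Real.exp (-γ))
          + Real.exp (-γ * t) * Real.exp (-γ))) * (1 - Real.exp (-γ))⁻¹
        = (1 + Real.exp (-γ)) * (1 - Real.exp (-γ))⁻¹
          - (Real.exp (-γ * (1 - t)) * (1 - Real.exp (-γ))⁻¹ + Real.exp (-γ * t)
            + Real.exp (-γ * t) * Real.exp (-γ) * (1 - Real.exp (-γ))⁻¹) := by
      field_simp
      try ring
    rw [← key]
    apply mul_nonneg _ (inv_nonneg.mpr h1r.le)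
    nlinarith [Real.exp_pos (-γ * t), Real.exp_pos (-γ * (1 - t))]
  have hpt : ∀ k : ℤ, Real.exp (-β * |(k : ℝ)|) * Real.exp (-α * |x - (k : ℝ)|)
      ≤ Real.exp (-β * |x|) * Real.exp (-γ * |x - (k : ℝ)|) := by
    intro k
    rw [← Real.exp_add, ← Real.exp_add, Real.exp_le_exp]
    have htri : |x| ≤ |(k : ℝ)| + |x - k| := by
      calc |x| = |(k : ℝ) + (x - k)| := by norm_num
        _ ≤ _ := abs_add_le _ _
    rw [hγdef]
    nlinarith
  have hsummaj : Summable (fun k : ℤ => Real.exp (-β * |x|) * Real.exp (-γ * |x - (k : ℝ)|)) :=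
    (htrans.summable).mul_left _
  have hsum : Summable (fun k : ℤ => Real.exp (-β * |(k : ℝ)|) * Real.exp (-α * |x - (k : ℝ)|)) :=
    hsummaj.of_nonneg_of_le (fun k => by positivity) hpt
  calc ∑' k : ℤ, Real.exp (-β * |(k : ℝ)|) * Real.exp (-α * |x - (k : ℝ)|)
      ≤ ∑' k : ℤ, Real.exp (-β * |x|) * Real.exp (-γ * |x - (k : ℝ)|) :=
        Summable.tsum_le_tsum hpt hsum hsummaj
    _ = Real.exp (-β * |x|) * ∑' k : ℤ, Real.exp (-γ * |x - (k : ℝ)|) := tsum_mul_left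
    _ ≤ Real.exp (-β * |x|) * ((1 + Real.exp (-γ)) / (1 - Real.exp (-γ))) := by
        apply mul_le_mul_of_nonneg_left _ (Real.exp_pos _).le
        rw [htrans.tsum_eq]; exact hSbound
    _ = _ := by rw [show -γ = β - α by rw [hγdef]; ring]
end

section
/- Under the hypotheses of cardinal interpolation (φ continuous, symmetric, sup_{x∈[0,1]^d} Σ_k |φ(x-k)| < ∞, and σ_φ > 0 on T^d), if a bounded sequence c : ℤ^d → ℝ satisfies Σ_{k∈ℤ^d} c_k φ(j-k) = 0 for all j ∈ ℤ^d, then c = 0. -/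
open scoped BigOperators

/-!
The values `Φ k = φ k` form an element of the convolution algebra `ℓ¹(ℤ^d)`, a commutative
unital Banach algebra whose characters are the evaluations `f ↦ ∑ f k e^{i k·t}` at points `t`
of the torus. The real part of this Fourier series of `Φ` is the cardinal symbol, which is
positive, so no character vanishes at `Φ` and Gelfand theory makes `Φ` invertible (Wiener's
lemma). Since `c` is bounded, convolution by `Φ⁻¹ ∈ ℓ¹` is associative with the homogeneous
equation `Φ * c = 0`, whence `c = Φ⁻¹ * (Φ * c) = 0`.
-/

noncomputable section

abbrev EllOne (G : Type*) := lp (fun _ : G => ℂ) 1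

namespace EllOne

section Convolution

variable {G : Type*} [AddCommGroup G]

def conv (f g : G → ℂ) (k : G) : ℂ := ∑' l, f l * g (k - l)

theorem conv_comm (f g : G → ℂ) : conv f g = conv g f := by
  funext k
  rw [conv, conv, ← (Equiv.subLeft k).tsum_eq]
  simp [mul_comm]

theorem single_conv [DecidableEq G] (j : G) (a : ℂ) (f : G → ℂ) :
    conv (Pi.single j a) f = fun k => a * f (k - j) := by
  funext k
  rw [conv, tsum_eq_single j fun l hl => by simp [hl]]
  simp

theorem conv_zero (f : G → ℂ) : conv f 0 = 0 := by
  funext k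
  simp [conv]

theorem conv_smul (f g : G → ℂ) (r : ℂ) : conv f (r • g) = r • conv f g := by
  funext k
  simp only [conv, Pi.smul_apply, smul_eq_mul, ← tsum_mul_left]
  exact tsum_congr fun l => by ring

variable {f g h : G → ℂ}

theorem summable_mul_sub_of_bounded (hf : Summable (‖f ·‖)) {C : ℝ} (hg : ∀ k, ‖g k‖ ≤ C)
    (k : G) : Summable fun l => f l * g (k - l) :=
  .of_norm_bounded (hf.mul_right C) fun l => by
    rw [norm_mul]
    exact mul_le_mul_of_nonneg_left (hg _) (norm_nonneg _)

theorem conv_add (hf : Summable (‖f ·‖)) (hg : Summable (‖g ·‖)) (hh : Summable (‖h ·‖)) :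
    conv f (g + h) = conv f g + conv f h := by
  funext k
  simp only [conv, Pi.add_apply, mul_add]
  exact (summable_mul_sub_of_bounded hf (hg.le_tsum · fun _ _ => norm_nonneg _) k).tsum_add
    (summable_mul_sub_of_bounded hf (hh.le_tsum · fun _ _ => norm_nonneg _) k)

theorem hasSum_norm_mul_norm_sub (hf : Summable (‖f ·‖)) (hg : Summable (‖g ·‖)) :
    HasSum (fun p : G × G => ‖f p.2‖ * ‖g (p.1 - p.2)‖) ((∑' k, ‖f k‖) * ∑' k, ‖g k‖) :=
  ((Equiv.prodComm G G).trans (Equiv.prodShear (Equiv.refl G) Equiv.subRight)).hasSum_iff.2 <|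
    hf.hasSum.mul hg.hasSum <|
      hf.mul_of_nonneg hg (fun _ => norm_nonneg _) fun _ => norm_nonneg _

theorem hasSum_tsum_norm_mul_norm_sub (hf : Summable (‖f ·‖)) (hg : Summable (‖g ·‖)) :
    HasSum (fun k => ∑' l, ‖f l‖ * ‖g (k - l)‖) ((∑' k, ‖f k‖) * ∑' k, ‖g k‖) :=
  (hasSum_norm_mul_norm_sub hf hg).prod_fiberwise fun k =>
    ((hasSum_norm_mul_norm_sub hf hg).summable.prod_factor k).hasSum

theorem norm_conv_le (hf : Summable (‖f ·‖)) (hg : Summable (‖g ·‖)) (k : G) :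
    ‖conv f g k‖ ≤ ∑' l, ‖f l‖ * ‖g (k - l)‖ := by
  simpa only [conv, norm_mul] using norm_tsum_le_tsum_norm (f := fun l => f l * g (k - l))
    (by simpa [norm_mul] using (hasSum_norm_mul_norm_sub hf hg).summable.prod_factor k)

theorem summable_norm_conv (hf : Summable (‖f ·‖)) (hg : Summable (‖g ·‖)) :
    Summable (‖conv f g ·‖) :=
  .of_nonneg_of_le (fun _ => norm_nonneg _) (norm_conv_le hf hg)
    (hasSum_tsum_norm_mul_norm_sub hf hg).summable

theorem tsum_norm_conv_le (hf : Summable (‖f ·‖)) (hg : Summable (‖g ·‖)) :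
    ∑' k, ‖conv f g k‖ ≤ (∑' k, ‖f k‖) * ∑' k, ‖g k‖ :=
  ((summable_norm_conv hf hg).tsum_le_tsum (norm_conv_le hf hg)
    (hasSum_tsum_norm_mul_norm_sub hf hg).summable).trans_eq
    (hasSum_tsum_norm_mul_norm_sub hf hg).tsum_eq

theorem conv_assoc (hf : Summable (‖f ·‖)) (hg : Summable (‖g ·‖)) {C : ℝ}
    (hh : ∀ k, ‖h k‖ ≤ C) : conv (conv f g) h = conv f (conv g h) := by
  funext k
  have hF : Summable fun p : G × G => f p.2 * g (p.1 - p.2) * h (k - p.1) :=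
    .of_norm_bounded ((hasSum_norm_mul_norm_sub hf hg).summable.mul_right C) fun p => by
      simp only [norm_mul]
      exact mul_le_mul_of_nonneg_left (hh _) (by positivity)
  calc conv (conv f g) h k = ∑' m, ∑' l, f l * g (m - l) * h (k - m) := by
        simp only [conv, tsum_mul_right]
    _ = ∑' l, ∑' m, f l * g (m - l) * h (k - m) :=
        (hF.tsum_comm (f := fun m l => f l * g (m - l) * h (k - m))).symm
    _ = ∑' l, f l * ∑' n, g n * h (k - l - n) := by
        refine tsum_congr fun l => ?_
        rw [← tsum_mul_left, ← (Equiv.addLeft l).tsum_eq]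
        simp [mul_assoc, sub_add_eq_sub_sub]
    _ = conv f (conv g h) k := rfl

end Convolution

section Algebra

variable {G : Type*}

theorem memℓp_one_iff {f : G → ℂ} : Memℓp f 1 ↔ Summable (‖f ·‖) := by
  rw [memℓp_gen_iff (by norm_num)]
  simp

theorem summable_norm (f : EllOne G) : Summable (‖f ·‖) := memℓp_one_iff.1 f.2

theorem norm_eq_tsum_norm (f : EllOne G) : ‖f‖ = ∑' k, ‖f k‖ := by
  simpa using lp.norm_eq_tsum_rpow (by norm_num) f

variable [AddCommGroup G]

instance : Mul (EllOne G) :=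
  ⟨fun f g => ⟨conv f g, memℓp_one_iff.2 (summable_norm_conv (summable_norm f) (summable_norm g))⟩⟩

theorem coe_mul (f g : EllOne G) : ⇑(f * g) = conv f g := rfl

variable [DecidableEq G]

instance : One (EllOne G) := ⟨lp.single 1 0 1⟩

theorem one_conv (f : G → ℂ) : conv (⇑(1 : EllOne G)) f = f := by
  simp [show ⇑(1 : EllOne G) = Pi.single 0 1 from rfl, single_conv]

instance : CommRing (EllOne G) :=
  { (inferInstance : AddCommGroup (EllOne G)) with
    mul := (· * ·)
    one := 1
    mul_comm f g := lp.ext (conv_comm f g)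
    left_distrib f g h :=
      lp.ext (conv_add (summable_norm f) (summable_norm g) (summable_norm h))
    right_distrib f g h := lp.ext <| by
      simp only [coe_mul, lp.coeFn_add]
      rw [conv_comm, conv_add (summable_norm h) (summable_norm f) (summable_norm g),
        conv_comm h, conv_comm h]
    zero_mul f := lp.ext <| by simp only [coe_mul, lp.coeFn_zero, conv_comm 0, conv_zero]
    mul_zero f := lp.ext <| by simp only [coe_mul, lp.coeFn_zero, conv_zero]
    mul_assoc f g h := lp.ext <|
      conv_assoc (summable_norm f) (summable_norm g) (lp.norm_apply_le_norm one_ne_zero h)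
    one_mul f := lp.ext (one_conv f)
    mul_one f := lp.ext <| by rw [coe_mul, conv_comm, one_conv] }

instance : NormedCommRing (EllOne G) :=
  { (inferInstance : CommRing (EllOne G)), (inferInstance : NormedAddCommGroup (EllOne G)) with
    norm_mul_le f g := by
      rw [norm_eq_tsum_norm, norm_eq_tsum_norm, norm_eq_tsum_norm]
      exact tsum_norm_conv_le (summable_norm f) (summable_norm g) }

instance : Algebra ℂ (EllOne G) :=
  Algebra.ofModule
    (fun r f g => lp.ext <| by
      simp only [coe_mul, lp.coeFn_smul]
      rw [conv_comm, conv_smul, conv_comm])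
    (fun r f g => lp.ext <| by simp only [coe_mul, lp.coeFn_smul, conv_smul])

instance : NormedAlgebra ℂ (EllOne G) where
  norm_smul_le := norm_smul_le

instance : NormOneClass (EllOne G) :=
  ⟨(lp.norm_single (p := 1) (E := fun _ : G => ℂ) (by norm_num) 0 1).trans norm_one⟩

end Algebra

section Characters

variable {G : Type*} [AddCommGroup G] [DecidableEq G]

theorem single_mul_single (j k : G) :
    (lp.single 1 j 1 : EllOne G) * lp.single 1 k 1 = lp.single 1 (j + k) 1 :=
  lp.ext <| by
    rw [coe_mul, lp.coeFn_single, lp.coeFn_single, single_conv]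
    funext m
    simp [Pi.single_apply, sub_eq_iff_eq_add']

variable (χ : WeakDual.characterSpace ℂ (EllOne G))

def toAddChar : AddChar G ℂ where
  toFun k := χ (lp.single 1 k 1)
  map_zero_eq_one' := map_one χ
  map_add_eq_mul' j k := by rw [← single_mul_single, map_mul]

theorem norm_toAddChar (k : G) : ‖toAddChar χ k‖ = 1 := by
  have hle (k : G) : ‖toAddChar χ k‖ ≤ 1 :=
    (AlgHom.norm_apply_le_self χ _).trans_eq <|
      (lp.norm_single (p := 1) (E := fun _ : G => ℂ) (by norm_num) k 1).trans norm_one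
  have hinv : ‖toAddChar χ k‖ * ‖toAddChar χ (-k)‖ = 1 := by
    rw [← norm_mul, ← AddChar.map_add_eq_mul, add_neg_cancel, AddChar.map_zero_eq_one, norm_one]
  nlinarith [hle k, hle (-k), norm_nonneg (toAddChar χ k), norm_nonneg (toAddChar χ (-k))]

theorem hasSum_mul_toAddChar (f : EllOne G) :
    HasSum (fun k => f k * toAddChar χ k) (χ f) := by
  refine ((WeakDual.CharacterSpace.toCLM χ).hasSum
    (lp.hasSum_single (p := 1) (by norm_num) f)).congr_fun fun k => ?_
  have hsingle : (lp.single 1 k (f k) : EllOne G) = f k • lp.single 1 k 1 := by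
    rw [← lp.single_smul, smul_eq_mul, mul_one]
  rw [WeakDual.CharacterSpace.coe_toCLM, hsingle, map_smul, smul_eq_mul]
  rfl

end Characters

end EllOne

theorem AddChar.exists_eq_exp {d : ℕ} (ψ : AddChar (Fin d → ℤ) ℂ)
    (hψ : ∀ i, ‖ψ (Pi.single i 1)‖ = 1) :
    ∃ t : Fin d → ℝ, ∀ k, ψ k = Complex.exp (↑(∑ i, (k i : ℝ) * t i) * Complex.I) := by
  have hgen (i : Fin d) : ∃ θ : ℝ, ψ (Pi.single i 1) = Complex.exp (θ * Complex.I) :=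
    ⟨_, by simpa [hψ i] using (Complex.norm_mul_exp_arg_mul_I (ψ (Pi.single i 1))).symm⟩
  choose t ht using hgen
  refine ⟨t, fun k => ?_⟩
  calc ψ k = ψ (∑ i, k i • Pi.single i 1) := by
        congr 1
        funext j
        simp [Finset.sum_apply, Pi.single_apply]
    _ = ∏ i, ψ (k i • Pi.single i 1) :=
        map_prod ψ.toMonoidHom (fun i => Multiplicative.ofAdd (k i • Pi.single i 1)) _
    _ = _ := by
      simp_rw [AddChar.map_zsmul_eq_zpow, ht, ← Complex.exp_int_mul, Complex.ofReal_sum,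
        Finset.sum_mul, Complex.exp_sum]
      push_cast
      exact Finset.prod_congr rfl fun i _ => congrArg Complex.exp (by ring)

theorem Complex.re_tsum_ofReal_mul_exp {ι : Type*} {a : ι → ℝ} (ha : Summable fun k => |a k|)
    (θ : ι → ℝ) :
    (∑' k, (a k : ℂ) * Complex.exp (θ k * Complex.I)).re = ∑' k, a k * Real.cos (θ k) := by
  rw [Complex.re_tsum (.of_norm_bounded ha fun k => by simp)]
  simp [Complex.exp_ofReal_mul_I_re]

namespace EllOne

theorem isUnit_of_forall_tsum_mul_exp_ne_zero {d : ℕ} (f : EllOne (Fin d → ℤ))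
    (hf : ∀ t : Fin d → ℝ,
      ∑' k, f k * Complex.exp (↑(∑ i, (k i : ℝ) * t i) * Complex.I) ≠ 0) :
    IsUnit f := by
  by_contra hunit
  obtain ⟨χ, hχ⟩ := WeakDual.CharacterSpace.exists_apply_eq_zero hunit
  obtain ⟨t, ht⟩ := (toAddChar χ).exists_eq_exp fun i => norm_toAddChar χ _
  refine hf t ?_
  simp_rw [← ht, (hasSum_mul_toAddChar χ f).tsum_eq, hχ]

theorem eq_zero_of_conv_eq_zero {G : Type*} [AddCommGroup G] [DecidableEq G] {a : EllOne G}
    (ha : IsUnit a) {c : G → ℂ} {C : ℝ} (hc : ∀ k, ‖c k‖ ≤ C) (h : conv a c = 0) : c = 0 := by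
  obtain ⟨b, hb⟩ := ha.exists_left_inv
  calc c = conv (⇑(b * a)) c := by rw [hb, one_conv]
    _ = conv b (conv a c) := conv_assoc (summable_norm b) (summable_norm a) hc
    _ = 0 := by rw [h, conv_zero]

end EllOne

end

theorem stmt_14_general {d : ℕ} (φ : (Fin d → ℝ) → ℝ)
    (hsum : ∀ x ∈ Set.Icc (0 : Fin d → ℝ) 1,
      Summable fun k : Fin d → ℤ => |φ (x - fun i => (k i : ℝ))|)
    -- positivity of the (real-valued) cardinal symbol on the torus
    (hpos : ∀ t : Fin d → ℝ,
      0 < ∑' k : Fin d → ℤ,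
        φ (fun i => (k i : ℝ)) * Real.cos (∑ i, (k i : ℝ) * t i))
    (c : (Fin d → ℤ) → ℝ) (Cc : ℝ) (hc : ∀ k, |c k| ≤ Cc)
    (hhom : ∀ j : Fin d → ℤ,
      (∑' k : Fin d → ℤ, c k * φ (fun i => ((j i - k i : ℤ) : ℝ))) = 0) :
    c = 0 := by
  have hφ : Summable fun k : Fin d → ℤ => |φ (fun i => (k i : ℝ))| := by
    refine (Equiv.neg _).summable_iff.1 ?_
    simpa [Function.comp_def, Pi.neg_def] using hsum 0 ⟨le_rfl, zero_le_one⟩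
  let Φ : EllOne (Fin d → ℤ) :=
    ⟨fun k => (φ (fun i => (k i : ℝ)) : ℂ), EllOne.memℓp_one_iff.2 (by simpa using hφ)⟩
  have hΦ : IsUnit Φ := EllOne.isUnit_of_forall_tsum_mul_exp_ne_zero Φ fun t h => by
    have h_re := congrArg Complex.re h
    rw [Complex.re_tsum_ofReal_mul_exp hφ, Complex.zero_re] at h_re
    exact (hpos t).ne' h_re
  have hconv : EllOne.conv Φ (fun k => (c k : ℂ)) = 0 := by
    rw [EllOne.conv_comm]
    funext j
    rw [EllOne.conv, Pi.zero_apply, ← Complex.ofReal_zero, ← hhom j, Complex.ofReal_tsum]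
    exact tsum_congr fun k => (Complex.ofReal_mul _ _).symm
  have hc0 := EllOne.eq_zero_of_conv_eq_zero hΦ (C := Cc) (fun k => by simpa using hc k) hconv
  funext k
  simpa using congrFun hc0 k

theorem stmt_14 {d : ℕ} (φ : (Fin d → ℝ) → ℝ) (hφc : Continuous φ)
    (hφsymm : ∀ x, φ (-x) = φ x)
    (hsum : ∀ x ∈ Set.Icc (0 : Fin d → ℝ) 1,
      Summable fun k : Fin d → ℤ => |φ (x - fun i => (k i : ℝ))|)
    (M : ℝ)
    (hM : ∀ x ∈ Set.Icc (0 : Fin d → ℝ) 1,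
      (∑' k : Fin d → ℤ, |φ (x - fun i => (k i : ℝ))|) ≤ M)
    -- positivity of the (real-valued) cardinal symbol on the torus
    (hpos : ∀ t : Fin d → ℝ,
      0 < ∑' k : Fin d → ℤ,
        φ (fun i => (k i : ℝ)) * Real.cos (∑ i, (k i : ℝ) * t i))
    (c : (Fin d → ℤ) → ℝ) (Cc : ℝ) (hc : ∀ k, |c k| ≤ Cc)
    (hhom : ∀ j : Fin d → ℤ,
      (∑' k : Fin d → ℤ, c k * φ (fun i => ((j i - k i : ℤ) : ℝ))) = 0) :
    c = 0 :=
  stmt_14_general φ hsum hpos c Cc hc hhom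
end
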